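/- Let a₁,b₁,c₁,d₁,a₂,b₂,c₂,d₂,a₃,b₃,c₃,d₃ be integers in {0,1,…,16} with aᵢ+bᵢ+cᵢ+dᵢ = 16 for i = 1,2,3, and with a₁ ≤ b₁ and a₂ ≤ b₂. Let M be the symmetric 6×6 matrix with rows (−2,10,a₁,b₁,a₂,b₂), (10,−2,c₁,d₁,c₂,d₂), (a₁,c₁,−2,10,a₃,b₃), (b₁,d₁,10,−2,c₃,d₃), (a₂,c₂,a₃,c₃,−2,10), (b₂,d₂,b₃,d₃,10,−2). Then M has rank 3 (over ℚ) if and only if (a₁,b₁,c₁,d₁,a₂,b₂,c₂,d₂,a₃,b₃,c₃,d₃) = (1,7,7,1,1,7,7,1,7,1,1,7). -/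

import Mathlib

/-!
Each pair of quadric sections gives a principal 4 × 4 minor of `M`, which vanishes when `M` has
rank 3. If its four mixed entries `a, b, c, d` are nonnegative with sum 16, sixteen times this
minor is a sum of nonnegative terms that vanishes only when `a = d` and `b = c`. Hence
`aᵢ + bᵢ = 8` for each pair, and the minor on `B₁, B₂, B₃, B₅` becomes
`32 ((a₁-4)(a₂-4)(a₃-4) + 3 ∑ (aᵢ-4)² - 108)`, whose only integer zero with `a₁, a₂ ≤ 4` is
`(1, 1, 7)`. Conversely, for these values the last three rows of `M` are combinations of the
first three, whose principal minor is `432`.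
-/

open Matrix

namespace Matrix

theorem card_le_rank_of_det_submatrix_ne_zero {K m n ι : Type*} [Field K] [Fintype n]
    [Fintype ι] [DecidableEq ι] (A : Matrix m n K) (r : ι → m) (c : ι → n)
    (h : (A.submatrix r c).det ≠ 0) : Fintype.card ι ≤ A.rank :=
  (A.submatrix r c).rank_of_isUnit ((isUnit_iff_isUnit_det _).mpr h.isUnit) ▸
    A.rank_submatrix_le r c

theorem det_submatrix_eq_zero_of_rank_map_lt {R K m n ι : Type*} [CommRing R] [Field K]
    [Fintype n] [Fintype ι] [DecidableEq ι] (f : R →+* K) (hf : Function.Injective f)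
    (A : Matrix m n R) (r : ι → m) (c : ι → n) (h : (A.map f).rank < Fintype.card ι) :
    (A.submatrix r c).det = 0 := by
  apply hf
  rw [map_zero, RingHom.map_det, RingHom.mapMatrix_apply, ← submatrix_map]
  by_contra hdet
  exact h.not_ge (card_le_rank_of_det_submatrix_ne_zero _ r c hdet)

end Matrix

section Gram

variable {R : Type*} [CommRing R]

/-- The intersection matrix of `B₁, B₂, B₃, B₄`, where `B₁ + B₂` and `B₃ + B₄` are quadric
sections and `B₁ · B₃ = a`, `B₁ · B₄ = b`, `B₂ · B₃ = c`, `B₂ · B₄ = d`. -/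
def quadricPairGram (a b c d : R) : Matrix (Fin 4) (Fin 4) R :=
  !![-2, 10, a, b; 10, -2, c, d; a, c, -2, 10; b, d, 10, -2]

def splitQuadricGram (a1 b1 c1 d1 a2 b2 c2 d2 a3 b3 c3 d3 : R) : Matrix (Fin 6) (Fin 6) R :=
  !![-2, 10, a1, b1, a2, b2;
     10, -2, c1, d1, c2, d2;
     a1, c1, -2, 10, a3, b3;
     b1, d1, 10, -2, c3, d3;
     a2, c2, a3, c3, -2, 10;
     b2, d2, b3, d3, 10, -2]

variable (a1 b1 c1 d1 a2 b2 c2 d2 a3 b3 c3 d3 : R)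

theorem map_splitQuadricGram {S : Type*} [CommRing S] (f : R →+* S) :
    (splitQuadricGram a1 b1 c1 d1 a2 b2 c2 d2 a3 b3 c3 d3).map f =
      splitQuadricGram (f a1) (f b1) (f c1) (f d1) (f a2) (f b2) (f c2) (f d2)
        (f a3) (f b3) (f c3) (f d3) := by
  ext i j
  fin_cases i <;> fin_cases j <;> simp [splitQuadricGram, map_ofNat]

theorem splitQuadricGram_submatrix_0123 :
    (splitQuadricGram a1 b1 c1 d1 a2 b2 c2 d2 a3 b3 c3 d3).submatrix
        ![0, 1, 2, 3] ![0, 1, 2, 3] =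
      quadricPairGram a1 b1 c1 d1 := by
  ext i j
  fin_cases i <;> fin_cases j <;> rfl

theorem splitQuadricGram_submatrix_0145 :
    (splitQuadricGram a1 b1 c1 d1 a2 b2 c2 d2 a3 b3 c3 d3).submatrix
        ![0, 1, 4, 5] ![0, 1, 4, 5] =
      quadricPairGram a2 b2 c2 d2 := by
  ext i j
  fin_cases i <;> fin_cases j <;> rfl

theorem splitQuadricGram_submatrix_2345 :
    (splitQuadricGram a1 b1 c1 d1 a2 b2 c2 d2 a3 b3 c3 d3).submatrix
        ![2, 3, 4, 5] ![2, 3, 4, 5] =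
      quadricPairGram a3 b3 c3 d3 := by
  ext i j
  fin_cases i <;> fin_cases j <;> rfl

theorem det_splitQuadricGram_submatrix_0124 (h1 : a1 + c1 = 8) (h2 : a2 + c2 = 8) :
    ((splitQuadricGram a1 b1 c1 d1 a2 b2 c2 d2 a3 b3 c3 d3).submatrix
        ![0, 1, 2, 4] ![0, 1, 2, 4]).det =
      32 * ((a1 - 4) * (a2 - 4) * (a3 - 4) +
        3 * ((a1 - 4) ^ 2 + (a2 - 4) ^ 2 + (a3 - 4) ^ 2) - 108) := by
  have hsub : (splitQuadricGram a1 b1 c1 d1 a2 b2 c2 d2 a3 b3 c3 d3).submatrix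
      ![0, 1, 2, 4] ![0, 1, 2, 4] =
        !![-2, 10, a1, a2; 10, -2, c1, c2; a1, c1, -2, a3; a2, c2, a3, -2] := by
    ext i j
    fin_cases i <;> fin_cases j <;> rfl
  obtain rfl : c1 = 8 - a1 := by linear_combination h1
  obtain rfl : c2 = 8 - a2 := by linear_combination h2
  simp [hsub, det_succ_row_zero, Fin.sum_univ_succ, Fin.succAbove]
  ring

theorem det_quadricPairGram {a b c d : R} (hs : a + b + c + d = 16) :
    16 * (quadricPairGram a b c d).det =
      ((b - c) ^ 2 - (a - d) ^ 2) ^ 2 + 64 * (a + d) * (b - c) ^ 2 +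
        64 * (b + c) * (a - d) ^ 2 + 256 * ((a - d) ^ 2 + (b - c) ^ 2) := by
  obtain rfl : d = 16 - a - b - c := by linear_combination hs
  simp [quadricPairGram, det_succ_row_zero, Fin.sum_univ_succ, Fin.succAbove]
  ring

end Gram

theorem eq_of_det_quadricPairGram_eq_zero {R : Type*} [CommRing R] [LinearOrder R]
    [IsStrictOrderedRing R] {a b c d : R} (ha : 0 ≤ a) (hb : 0 ≤ b) (hc : 0 ≤ c) (hd : 0 ≤ d)
    (hs : a + b + c + d = 16) (hdet : (quadricPairGram a b c d).det = 0) : a = d ∧ b = c := by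
  have hsos := det_quadricPairGram hs
  rw [hdet, mul_zero] at hsos
  have hp := sq_nonneg (a - d)
  have hq := sq_nonneg (b - c)
  have hsum : (a - d) ^ 2 + (b - c) ^ 2 = 0 := by
    nlinarith [sq_nonneg ((b - c) ^ 2 - (a - d) ^ 2), mul_nonneg (add_nonneg ha hd) hq,
      mul_nonneg (add_nonneg hb hc) hp]
  rwa [add_eq_zero_iff_of_nonneg hp hq, sq_eq_zero_iff, sq_eq_zero_iff, sub_eq_zero,
    sub_eq_zero] at hsum

theorem eq_one_one_seven_of_cubic_eq {x y z : ℤ} (hx : 0 ≤ x ∧ x ≤ 4) (hy : 0 ≤ y ∧ y ≤ 4)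
    (hz : 0 ≤ z ∧ z ≤ 8)
    (h : (x - 4) * (y - 4) * (z - 4) + 3 * ((x - 4) ^ 2 + (y - 4) ^ 2 + (z - 4) ^ 2) = 108) :
    x = 1 ∧ y = 1 ∧ z = 7 := by
  obtain ⟨hx0, hx4⟩ := hx
  obtain ⟨hy0, hy4⟩ := hy
  obtain ⟨hz0, hz8⟩ := hz
  revert h
  interval_cases x <;> interval_cases y <;> interval_cases z <;> norm_num

theorem rank_splitQuadricGram_one_seven :
    (splitQuadricGram (1 : ℚ) 7 7 1 1 7 7 1 7 1 1 7).rank = 3 := by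
  refine le_antisymm ?_ ?_
  · have hfactor : splitQuadricGram (1 : ℚ) 7 7 1 1 7 7 1 7 1 1 7 =
        (!![1, 0, 0; 0, 1, 0; 0, 0, 1; 1, 1, -1; 3/2, 1/2, -1; -1/2, 1/2, 1] :
          Matrix (Fin 6) (Fin 3) ℚ) *
        (!![-2, 10, 1, 7, 1, 7; 10, -2, 7, 1, 7, 1; 1, 7, -2, 10, 7, 1] :
          Matrix (Fin 3) (Fin 6) ℚ) := by
      ext i j
      fin_cases i <;> fin_cases j <;>
        norm_num [splitQuadricGram, mul_apply, Fin.sum_univ_succ]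
    rw [hfactor]
    exact (rank_mul_le_left _ _).trans ((rank_le_card_width _).trans_eq (Fintype.card_fin 3))
  · have hsub :
        (splitQuadricGram (1 : ℚ) 7 7 1 1 7 7 1 7 1 1 7).submatrix ![0, 1, 2] ![0, 1, 2] =
        !![-2, 10, 1; 10, -2, 7; 1, 7, -2] := by
      ext i j
      fin_cases i <;> fin_cases j <;> rfl
    have hdet : (!![-2, 10, 1; 10, -2, 7; 1, 7, -2] : Matrix (Fin 3) (Fin 3) ℚ).det ≠ 0 := by
      simp [det_fin_three]
      norm_num
    simpa using card_le_rank_of_det_submatrix_ne_zero (ι := Fin 3) _ _ _ (hsub.symm ▸ hdet)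

/-- The intersection matrix of the six rational quartic curves on a quartic K3
surface with three split quadric sections has rank `3` iff the parameters are
`(1,7,7,1,1,7,7,1,7,1,1,7)`. -/
theorem stmt_11 (a1 b1 c1 d1 a2 b2 c2 d2 a3 b3 c3 d3 : ℤ)
    (ha1 : 0 ≤ a1 ∧ a1 ≤ 16) (hb1 : 0 ≤ b1 ∧ b1 ≤ 16)
    (hc1 : 0 ≤ c1 ∧ c1 ≤ 16) (hd1 : 0 ≤ d1 ∧ d1 ≤ 16)
    (ha2 : 0 ≤ a2 ∧ a2 ≤ 16) (hb2 : 0 ≤ b2 ∧ b2 ≤ 16)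
    (hc2 : 0 ≤ c2 ∧ c2 ≤ 16) (hd2 : 0 ≤ d2 ∧ d2 ≤ 16)
    (ha3 : 0 ≤ a3 ∧ a3 ≤ 16) (hb3 : 0 ≤ b3 ∧ b3 ≤ 16)
    (hc3 : 0 ≤ c3 ∧ c3 ≤ 16) (hd3 : 0 ≤ d3 ∧ d3 ≤ 16)
    (hs1 : a1 + b1 + c1 + d1 = 16) (hs2 : a2 + b2 + c2 + d2 = 16)
    (hs3 : a3 + b3 + c3 + d3 = 16)
    (h1 : a1 ≤ b1) (h2 : a2 ≤ b2) :
    let M : Matrix (Fin 6) (Fin 6) ℚ :=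
      !![-2, 10, (a1 : ℚ), (b1 : ℚ), (a2 : ℚ), (b2 : ℚ);
         10, -2, (c1 : ℚ), (d1 : ℚ), (c2 : ℚ), (d2 : ℚ);
         (a1 : ℚ), (c1 : ℚ), -2, 10, (a3 : ℚ), (b3 : ℚ);
         (b1 : ℚ), (d1 : ℚ), 10, -2, (c3 : ℚ), (d3 : ℚ);
         (a2 : ℚ), (c2 : ℚ), (a3 : ℚ), (c3 : ℚ), -2, 10;
         (b2 : ℚ), (d2 : ℚ), (b3 : ℚ), (d3 : ℚ), 10, -2]
    M.rank = 3 ↔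
      (a1, b1, c1, d1, a2, b2, c2, d2, a3, b3, c3, d3) =
        ((1 : ℤ), 7, 7, 1, 1, 7, 7, 1, 7, 1, 1, 7) := by
  intro M
  have hM :
      M = (splitQuadricGram a1 b1 c1 d1 a2 b2 c2 d2 a3 b3 c3 d3).map (Int.castRingHom ℚ) := by
    rw [map_splitQuadricGram]
    rfl
  rw [hM]
  constructor
  · intro hrank
    have hminor (r : Fin 4 → Fin 6) :=
      det_submatrix_eq_zero_of_rank_map_lt (Int.castRingHom ℚ) Int.cast_injective
        (splitQuadricGram a1 b1 c1 d1 a2 b2 c2 d2 a3 b3 c3 d3) r r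
        (by rw [hrank, Fintype.card_fin]; norm_num)
    obtain ⟨rfl, rfl⟩ := eq_of_det_quadricPairGram_eq_zero ha1.1 hb1.1 hc1.1 hd1.1 hs1
      (splitQuadricGram_submatrix_0123 (R := ℤ) .. ▸ hminor _)
    obtain ⟨rfl, rfl⟩ := eq_of_det_quadricPairGram_eq_zero ha2.1 hb2.1 hc2.1 hd2.1 hs2
      (splitQuadricGram_submatrix_0145 (R := ℤ) .. ▸ hminor _)
    obtain ⟨rfl, rfl⟩ := eq_of_det_quadricPairGram_eq_zero ha3.1 hb3.1 hc3.1 hd3.1 hs3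
      (splitQuadricGram_submatrix_2345 (R := ℤ) .. ▸ hminor _)
    have hcubic := det_splitQuadricGram_submatrix_0124 a1 b1 b1 a1 a2 b2 b2 a2 a3 b3 b3 a3
      (by omega) (by omega)
    rw [hminor] at hcubic
    obtain ⟨rfl, rfl, rfl⟩ := eq_one_one_seven_of_cubic_eq ⟨ha1.1, by omega⟩ ⟨ha2.1, by omega⟩
      ⟨ha3.1, by omega⟩ (by linarith)
    obtain ⟨rfl, rfl, rfl⟩ : b1 = 7 ∧ b2 = 7 ∧ b3 = 1 := by omega
    rfl
  · intro h
    simp only [Prod.mk.injEq] at h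
    obtain ⟨rfl, rfl, rfl, rfl, rfl, rfl, rfl, rfl, rfl, rfl, rfl, rfl⟩ := h
    rw [map_splitQuadricGram]
    simpa using rank_splitQuadricGram_one_seven
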